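/- For two disks in the plane of equal radius r > 0 with centers at distance d, 0 ≤ d ≤ 2r, the area of their symmetric difference is at most 8·r·d. -/
import Mathlib

open MeasureTheory Metric Real

lemma vol_cb (x : EuclideanSpace ℝ (Fin 2)) (s : ℝ) (hs : 0 ≤ s) :
    volume (closedBall x s) = ENNReal.ofReal (π * s ^ 2) := by
  rw [EuclideanSpace.volume_closedBall]
  simp only [Fintype.card_fin]
  rw [show ((2 : ℕ) : ℝ) / 2 + 1 = 2 by norm_num, Real.Gamma_two]
  rw [← ENNReal.ofReal_pow hs, ← ENNReal.ofReal_mul (by positivity)]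
  congr 1
  rw [div_one, sq_sqrt pi_pos.le]
  ring

/-- The area of the symmetric difference of two disks of equal radius `r > 0` in the plane,
whose centers are at distance `d` with `0 ≤ d ≤ 2r`, is at most `8·r·d`. -/
theorem symmDiff_disks_area_le (r d : ℝ) (hr : 0 < r) (hd0 : 0 ≤ d) (hd : d ≤ 2 * r)
    (a b : EuclideanSpace ℝ (Fin 2)) (hab : dist a b = d) :
    (volume ((closedBall a r \ closedBall b r) ∪ (closedBall b r \ closedBall a r))).toReal ≤
      8 * r * d := by
  set m := midpoint ℝ a b with hm
  have hma : dist m a = d / 2 := by rw [hm, dist_midpoint_left, hab, Real.norm_two]; ring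
  have hmb : dist m b = d / 2 := by rw [hm, dist_midpoint_right, hab, Real.norm_two]; ring
  have key : ∀ c c' : EuclideanSpace ℝ (Fin 2), dist m c = d / 2 → dist m c' = d / 2 →
      ∀ x, x ∈ closedBall c r → x ∉ closedBall c' r →
        x ∈ closedBall m (r + d / 2) \ closedBall m (r - d / 2) := by
    intro c c' hc hc' x hin hout
    constructor
    · rw [mem_closedBall] at hin ⊢
      calc dist x m ≤ dist x c + dist c m := dist_triangle _ _ _
        _ ≤ r + d / 2 := add_le_add hin (by rw [dist_comm]; exact hc.le)
    · intro hxm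
      apply hout
      rw [mem_closedBall] at hxm ⊢
      calc dist x c' ≤ dist x m + dist m c' := dist_triangle _ _ _
        _ ≤ (r - d / 2) + d / 2 := add_le_add hxm hc'.le
        _ = r := by ring
  have hsub : (closedBall a r \ closedBall b r) ∪ (closedBall b r \ closedBall a r)
      ⊆ closedBall m (r + d / 2) \ closedBall m (r - d / 2) := by
    rintro x (⟨h1, h2⟩ | ⟨h1, h2⟩)
    · exact key a b hma hmb x h1 h2
    · exact key b a hmb hma x h1 h2
  have hd2 : (0:ℝ) ≤ r - d / 2 := by linarith
  have hd3 : (0:ℝ) ≤ r + d / 2 := by linarith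
  have hvol : volume (closedBall m (r + d / 2) \ closedBall m (r - d / 2))
      = ENNReal.ofReal (π * (r + d / 2) ^ 2) - ENNReal.ofReal (π * (r - d / 2) ^ 2) := by
    rw [measure_diff (closedBall_subset_closedBall (by linarith))
      measurableSet_closedBall.nullMeasurableSet
      (by rw [vol_cb m _ hd2]; exact ENNReal.ofReal_ne_top),
      vol_cb m _ hd3, vol_cb m _ hd2]
  have hle := measure_mono (μ := volume) hsub
  rw [hvol] at hle
  calc (volume ((closedBall a r \ closedBall b r) ∪ (closedBall b r \ closedBall a r))).toReal
      ≤ (ENNReal.ofReal (π * (r + d / 2) ^ 2) - ENNReal.ofReal (π * (r - d / 2) ^ 2)).toReal := by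
        apply ENNReal.toReal_mono _ hle
        exact ((tsub_le_self).trans_lt ENNReal.ofReal_lt_top).ne
    _ ≤ π * (r + d / 2) ^ 2 - π * (r - d / 2) ^ 2 := by
        rw [ENNReal.toReal_sub_of_le (ENNReal.ofReal_le_ofReal (by nlinarith [pi_pos, mul_nonneg hr.le hd0]))
          ENNReal.ofReal_ne_top, ENNReal.toReal_ofReal (by positivity),
          ENNReal.toReal_ofReal (by positivity)]
    _ = 2 * π * r * d := by ring
    _ ≤ 8 * r * d := by nlinarith [pi_le_four, mul_nonneg hr.le hd0]
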